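/- arXiv:1401.2011 — 8 statements merged into one kernel-verified Lean document; each statement's English description precedes it below -/
import Mathlib

section
/- If a formula φ is valid in all common-interpretation epistemic probability structures, then φ is valid under outermost-scope semantics in all epistemic probability structures (possibly with ambiguity). Concretely: given a structure M = (Ω, (Π_j), (P_j), (π_j)) and agent i, the structure M'_i obtained by replacing every interpretation π_j with π_i is a common-interpretation structure, and for every state ω and formula ψ, (M, ω, i) ⊨^ou ψ iff (M'_i, ω, i) ⊨ ψ. -/
open scoped ENNReal

/-- Formulas of the language `L_n^C(Φ)`: primitive propositions, negation, conjunction,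
linear probability formulas `a₁ pr_j(φ₁) + ... + a_k pr_j(φ_k) ≥ b`, and common belief. -/
inductive Formula (Φ N : Type) : Type where
  | tru : Formula Φ N
  | prim : Φ → Formula Φ N
  | neg : Formula Φ N → Formula Φ N
  | and : Formula Φ N → Formula Φ N → Formula Φ N
  | prob : N → (k : ℕ) → (Fin k → ℚ) → (Fin k → Formula Φ N) → ℚ → Formula Φ N
  | cb : Finset N → Formula Φ N → Formula Φ N

/-- An epistemic probability structure (with discrete probability measures) satisfying
A1–A4: a partition `part i` for each player, a discrete probability measure `mu i ω`
supported on the cell `part i ω` (A1), constant on cells (A2), and an interpretation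
`interp i` of primitive propositions for each player.  (A3, A4 are automatic since
all sets are measurable for discrete measures.) -/
structure EPS (Ω Φ N : Type) where
  part : N → Ω → Set Ω
  mu : N → Ω → Ω → ℝ≥0∞
  interp : N → Ω → Φ → Prop
  mem_part : ∀ i ω, ω ∈ part i ω
  part_cell : ∀ i ω ω', ω' ∈ part i ω → part i ω' = part i ω
  mu_prob : ∀ i ω, ∑' ω', mu i ω ω' = 1
  mu_supp : ∀ i ω ω', ω' ∉ part i ω → mu i ω ω' = 0
  mu_const : ∀ i ω ω', ω' ∈ part i ω → mu i ω' = mu i ω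

namespace EPS

variable {Ω Φ N : Type}

/-- The measure `μ_{j,ω}(S)` of a set `S`. -/
noncomputable def mval (M : EPS Ω Φ N) (j : N) (ω : Ω) (S : Set Ω) : ℝ≥0∞ :=
  ∑' x : S, M.mu j ω x

/-- The semantic belief operator: `ω ∈ Bset j S` iff `μ_{j,ω}(S ∩ Π_j(ω)) = 1`. -/
def Bset (M : EPS Ω Φ N) (j : N) (S : Set Ω) : Set Ω :=
  {ω | M.mval j ω (S ∩ M.part j ω) = 1}

/-- The semantic mutual-belief operator for the group `G`. -/
def Eset (M : EPS Ω Φ N) (G : Finset N) (S : Set Ω) : Set Ω :=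
  ⋂ j ∈ G, M.Bset j S

/-- Iterates of the mutual-belief operator. -/
def EIter (M : EPS Ω Φ N) (G : Finset N) : ℕ → Set Ω → Set Ω
  | 0, S => S
  | k + 1, S => M.Eset G (M.EIter G k S)

/-- Outermost-scope semantics: `[[φ]]^ou_i = {ω : (M,ω,i) ⊨^ou φ}`.  Probability
formulas for agent `j` are evaluated using `j`'s measure applied to the *outer*
agent `i`'s interpretation of the inner formulas. -/
def satOu (M : EPS Ω Φ N) : Formula Φ N → N → Set Ω
  | .tru, _ => Set.univ
  | .prim p, i => {ω | M.interp i ω p}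
  | .neg φ, i => (M.satOu φ i)ᶜ
  | .and φ ψ, i => M.satOu φ i ∩ M.satOu ψ i
  | .prob j _ a φs b, i =>
      {ω | (b : ℝ) ≤ ∑ m, (a m : ℝ) * (M.mval j ω (M.satOu (φs m) i ∩ M.part j ω)).toReal}
  | .cb G φ, i => ⋂ k : ℕ, M.EIter G k (M.Eset G (M.satOu φ i))

/-- Innermost-scope semantics: `[[φ]]^in_i = {ω : (M,ω,i) ⊨^in φ}`.  Probability
formulas for agent `j` are evaluated using `j`'s measure applied to `j`'s *own*
interpretation of the inner formulas. -/
def satIn (M : EPS Ω Φ N) : Formula Φ N → N → Set Ω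
  | .tru, _ => Set.univ
  | .prim p, i => {ω | M.interp i ω p}
  | .neg φ, i => (M.satIn φ i)ᶜ
  | .and φ ψ, i => M.satIn φ i ∩ M.satIn ψ i
  | .prob j _ a φs b, _ =>
      {ω | (b : ℝ) ≤ ∑ m, (a m : ℝ) * (M.mval j ω (M.satIn (φs m) j ∩ M.part j ω)).toReal}
  | .cb G φ, _ => ⋂ k : ℕ, M.EIter G k (⋂ j ∈ G, M.Bset j (M.satIn φ j))

end EPS

/-- `B_j φ`, an abbreviation for `pr_j(φ) ≥ 1` (equivalently `pr_j(φ) = 1`). -/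
def Bf {Φ N : Type} (j : N) (φ : Formula Φ N) : Formula Φ N :=
  .prob j 1 (fun _ => 1) (fun _ => φ) 1

/-- Conjunction of a list of formulas. -/
def bigAnd {Φ N : Type} (l : List (Formula Φ N)) : Formula Φ N :=
  l.foldr .and .tru

/-- The mutual-belief formula `E_G φ = ⋀_{j ∈ G} B_j φ`. -/
noncomputable def Ef {Φ N : Type} (G : Finset N) (φ : Formula Φ N) : Formula Φ N :=
  bigAnd (G.toList.map (fun j => Bf j φ))


lemma satOu_congr {Ω Φ N : Type} (M M' : EPS Ω Φ N) (i : N)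
    (hp : M'.part = M.part) (hmu : M'.mu = M.mu)
    (hi : M'.interp = (fun _ => M.interp i)) :
    ∀ ψ : Formula Φ N, M.satOu ψ i = M'.satOu ψ i := by
  have hm : M'.mval = M.mval := by
    funext j ω S; simp [EPS.mval, hmu]
  have hB : M'.Bset = M.Bset := by
    funext j S; simp [EPS.Bset, hm, hp]
  have hE : M'.Eset = M.Eset := by
    funext G S; simp [EPS.Eset, hB]
  have hEI : M'.EIter = M.EIter := by
    funext G k
    induction k with
    | zero => rfl
    | succ k ih => funext S; simp [EPS.EIter, hE, ih]
  intro ψ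
  induction ψ with
  | tru => rfl
  | prim p => simp [EPS.satOu, hi]
  | neg φ ih => simp [EPS.satOu, ih]
  | and φ ψ ih1 ih2 => simp [EPS.satOu, ih1, ih2]
  | prob j k a φs b ih =>
      have hs : ∀ ω, ∑ m, (a m : ℝ) * (M.mval j ω (M.satOu (φs m) i ∩ M.part j ω)).toReal
          = ∑ m, (a m : ℝ) * (M'.mval j ω (M'.satOu (φs m) i ∩ M'.part j ω)).toReal := by
        intro ω
        refine Finset.sum_congr rfl fun m _ => ?_
        rw [ih m, hm, hp]
      show {ω | _ ≤ _} = {ω | _ ≤ _}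
      ext ω
      rw [Set.mem_setOf_eq, Set.mem_setOf_eq, hs ω]
  | cb G φ ih => simp [EPS.satOu, ih, hEI, hE]

/-- If a formula `φ` is valid in all common-interpretation epistemic probability
structures, then `φ` is valid under outermost-scope semantics in all epistemic
probability structures (possibly with ambiguity).  Concretely: given a structure `M`
and agent `i`, any structure `M'` obtained from `M` by replacing every interpretation
`π_j` by `π_i` is a common-interpretation structure, and for every state `ω` and
formula `ψ`, `(M,ω,i) ⊨^ou ψ` iff `(M',ω,i) ⊨ ψ`.  (In a common-interpretation
structure the standard semantics agrees with outermost scope, so `⊨` is rendered as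
`satOu`.) -/
theorem common_valid_implies_ou_valid
    {Φ N : Type} (φ : Formula Φ N)
    (hvalid : ∀ (Ω : Type) (M : EPS Ω Φ N), (∀ j j', M.interp j = M.interp j') →
      ∀ (ω : Ω) (i : N), ω ∈ M.satOu φ i) :
    (∀ (Ω : Type) (M : EPS Ω Φ N) (ω : Ω) (i : N), ω ∈ M.satOu φ i) ∧
    (∀ (Ω : Type) (M M' : EPS Ω Φ N) (i : N),
      M'.part = M.part → M'.mu = M.mu → M'.interp = (fun _ => M.interp i) →
      (∀ j j', M'.interp j = M'.interp j') ∧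
      (∀ (ψ : Formula Φ N) (ω : Ω), ω ∈ M.satOu ψ i ↔ ω ∈ M'.satOu ψ i)) := by
  have key : ∀ (Ω : Type) (M M' : EPS Ω Φ N) (i : N),
      M'.part = M.part → M'.mu = M.mu → M'.interp = (fun _ => M.interp i) →
      (∀ j j', M'.interp j = M'.interp j') ∧
      (∀ (ψ : Formula Φ N) (ω : Ω), ω ∈ M.satOu ψ i ↔ ω ∈ M'.satOu ψ i) := by
    intro Ω M M' i hp hmu hi
    refine ⟨fun j j' => by rw [hi], fun ψ ω => ?_⟩
    rw [satOu_congr M M' i hp hmu hi ψ]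
  refine ⟨?_, key⟩
  intro Ω M ω i
  set M' : EPS Ω Φ N :=
    { part := M.part, mu := M.mu, interp := fun _ => M.interp i,
      mem_part := M.mem_part, part_cell := M.part_cell, mu_prob := M.mu_prob,
      mu_supp := M.mu_supp, mu_const := M.mu_const } with hM'
  obtain ⟨hci, hiff⟩ := key Ω M M' i rfl rfl rfl
  exact (hiff φ ω).mpr (hvalid Ω M' hci ω i)
end

section
/- Let M be an epistemic probability structure with discrete probability measures, over states Ω and n agents, and let M' be the 'disjoint copies' common-interpretation structure with state space Ω' = Ω₁ ∪ ... ∪ Ω_n (n disjoint copies of Ω), Π'_i(ω_j) = (Π_i(ω))' (the set of all copies of states in Π_i(ω)), π'(ω_j)(p) = π_j(ω)(p), and μ'_{i,ω_j}(E_i) = μ_{i,ω}(E) with μ'_{i,ω_j}(E_ℓ) = 0 for ℓ ≠ i. Then for every formula ψ, every ω ∈ Ω, and every agent j: (M', ω_j) ⊨ ψ if and only if (M, ω, j) ⊨^in ψ. -/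
open scoped ENNReal

section Aux

variable {Ω Φ N : Type} [DecidableEq N] (M : EPS Ω Φ N) (M' : EPS (Ω × N) Φ N)

lemma mval_slice (hmu : M'.mu = fun i q q' => if q'.2 = i then M.mu i q.1 q'.1 else 0)
    (i : N) (ω : Ω) (j : N) (S' : Set (Ω × N)) :
    M'.mval i (ω, j) S' = M.mval i ω ((fun ω' => (ω', i)) ⁻¹' S') := by
  unfold EPS.mval
  set e : ((fun ω' => (ω', i)) ⁻¹' S' : Set Ω) → (S' : Set (Ω × N)) :=
    fun y => ⟨(y.1, i), y.2⟩ with he_def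
  have he : Function.Injective e := by
    intro a b h
    apply Subtype.ext
    exact congrArg Prod.fst (congrArg Subtype.val h)
  have h0 : ∀ x : S', x ∉ Set.range e → M'.mu i (ω, j) x = 0 := by
    intro x hx
    rw [hmu]
    simp only
    rw [if_neg]
    intro h2
    apply hx
    have hval : ((x : Ω × N).1, i) = (x : Ω × N) := Prod.ext rfl h2.symm
    refine ⟨⟨(x : Ω × N).1, ?_⟩, ?_⟩
    · show ((x : Ω × N).1, i) ∈ S'
      rw [hval]; exact x.2
    · exact Subtype.ext hval
  have hsupp : Function.support (fun x : S' => M'.mu i (ω, j) x) ⊆ Set.range e := by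
    intro x hx
    by_contra hc
    exact hx (h0 x hc)
  rw [← he.tsum_eq hsupp]
  apply tsum_congr
  intro y
  simp [he_def, hmu]

lemma Bset_slice (hpart : M'.part = fun i q => {q' : Ω × N | q'.1 ∈ M.part i q.1})
    (hmu : M'.mu = fun i q q' => if q'.2 = i then M.mu i q.1 q'.1 else 0)
    (i : N) (S' : Set (Ω × N)) (S : Set Ω)
    (hS : ∀ ω', (ω', i) ∈ S' ↔ ω' ∈ S) (ω : Ω) (j : N) :
    (ω, j) ∈ M'.Bset i S' ↔ ω ∈ M.Bset i S := by
  simp only [EPS.Bset, Set.mem_setOf_eq]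
  rw [mval_slice M M' hmu]
  have : ((fun ω' => (ω', i)) ⁻¹' (S' ∩ M'.part i (ω, j))) = S ∩ M.part i ω := by
    ext ω'
    simp only [Set.mem_preimage, Set.mem_inter_iff, hpart, Set.mem_setOf_eq]
    exact and_congr (hS ω') Iff.rfl
  rw [this]

lemma Eset_lift (hpart : M'.part = fun i q => {q' : Ω × N | q'.1 ∈ M.part i q.1})
    (hmu : M'.mu = fun i q q' => if q'.2 = i then M.mu i q.1 q'.1 else 0)
    (G : Finset N) (S' : Set (Ω × N)) (S : N → Set Ω)
    (hS : ∀ i ω', (ω', i) ∈ S' ↔ ω' ∈ S i) :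
    M'.Eset G S' = {q : Ω × N | ∀ k ∈ G, q.1 ∈ M.Bset k (S k)} := by
  ext ⟨ω, j⟩
  simp only [EPS.Eset, Set.mem_iInter, Set.mem_setOf_eq]
  exact forall₂_congr fun k _ => Bset_slice M M' hpart hmu k S' (S k) (hS k) ω j

lemma EIter_lift (hpart : M'.part = fun i q => {q' : Ω × N | q'.1 ∈ M.part i q.1})
    (hmu : M'.mu = fun i q q' => if q'.2 = i then M.mu i q.1 q'.1 else 0)
    (G : Finset N) (T : Set Ω) (k : ℕ) :
    M'.EIter G k {q | q.1 ∈ T} = {q | q.1 ∈ M.EIter G k T} := by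
  induction k with
  | zero => rfl
  | succ k ih =>
    show M'.Eset G (M'.EIter G k _) = _
    rw [ih, Eset_lift M M' hpart hmu G _ (fun _ => M.EIter G k T) (fun i ω' => Iff.rfl)]
    ext q
    simp [EPS.EIter, EPS.Eset]

end Aux

/-- The "disjoint copies" construction: given an epistemic probability structure `M`
over states `Ω` and agents `N`, let `M'` be the common-interpretation structure over
`Ω' = Ω × N` (the copy `ω_j` is `(ω, j)`) with `Π'_i(ω_j) = (Π_i(ω))'` (all copies of
states in `Π_i(ω)`), common interpretation `π'(ω_j)(p) = π_j(ω)(p)`, and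
`μ'_{i,ω_j}(E_i) = μ_{i,ω}(E)`, `μ'_{i,ω_j}(E_ℓ) = 0` for `ℓ ≠ i` (i.e. point mass
`mu' i (ω,j) (ω',ℓ) = mu i ω ω'` if `ℓ = i`, else `0`).  Then for every formula `ψ`,
state `ω`, and agent `j`: `(M', ω_j) ⊨ ψ` iff `(M, ω, j) ⊨^in ψ`  (since `M'` has a
common interpretation, its standard semantics is rendered as `satOu` at an arbitrary
agent `i₀`). -/
theorem disjoint_copies_common_interpretation
    {Ω Φ N : Type} [DecidableEq N] (M : EPS Ω Φ N) (M' : EPS (Ω × N) Φ N)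
    (hpart : M'.part = fun i q => {q' : Ω × N | q'.1 ∈ M.part i q.1})
    (hmu : M'.mu = fun i q q' => if q'.2 = i then M.mu i q.1 q'.1 else 0)
    (hinterp : M'.interp = fun _ q p => M.interp q.2 q.1 p) :
    ∀ (ψ : Formula Φ N) (ω : Ω) (j i₀ : N),
      (ω, j) ∈ M'.satOu ψ i₀ ↔ ω ∈ M.satIn ψ j := by
  intro ψ
  induction ψ with
  | tru => intro ω j i₀; simp [EPS.satOu, EPS.satIn]
  | prim p => intro ω j i₀; simp [EPS.satOu, EPS.satIn, hinterp]
  | neg φ ih =>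
    intro ω j i₀
    simp only [EPS.satOu, EPS.satIn, Set.mem_compl_iff]
    exact not_congr (ih ω j i₀)
  | and φ ψ ih1 ih2 =>
    intro ω j i₀
    simp only [EPS.satOu, EPS.satIn, Set.mem_inter_iff]
    exact and_congr (ih1 ω j i₀) (ih2 ω j i₀)
  | prob j' k a φs b ih =>
    intro ω j i₀
    simp only [EPS.satOu, EPS.satIn, Set.mem_setOf_eq]
    have key : ∀ m, M'.mval j' (ω, j) (M'.satOu (φs m) i₀ ∩ M'.part j' (ω, j))
        = M.mval j' ω (M.satIn (φs m) j' ∩ M.part j' ω) := by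
      intro m
      rw [mval_slice M M' hmu]
      congr 1
      ext ω'
      simp only [Set.mem_preimage, Set.mem_inter_iff, hpart, Set.mem_setOf_eq]
      exact and_congr (ih m ω' j' i₀) Iff.rfl
    simp only [key]
  | cb G φ ih =>
    intro ω j i₀
    have hE : M'.Eset G (M'.satOu φ i₀)
        = {q : Ω × N | q.1 ∈ ⋂ k ∈ G, M.Bset k (M.satIn φ k)} := by
      rw [Eset_lift M M' hpart hmu G _ (fun k => M.satIn φ k)
        (fun k ω' => ih ω' k i₀)]
      ext q
      simp
    simp only [EPS.satOu, EPS.satIn, Set.mem_iInter]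
    refine forall_congr' fun k => ?_
    rw [hE, EIter_lift M M' hpart hmu]
    exact Iff.rfl
end

section
/- A formula φ is valid under innermost-scope semantics in all epistemic probability structures if and only if φ is valid in all common-interpretation epistemic probability structures. -/
open scoped ENNReal

namespace EPS

variable {Ω Φ N : Type}

open Classical

/-- The common-interpretation lift of a structure: states are pairs `(ω, i)` where
`i` records whose interpretation is in force; agent `j`'s cell at `(ω, i)` is
`Π_j(ω) × N`, with the measure concentrated on the copy `Ω × {j}`. -/
noncomputable def lift (M : EPS Ω Φ N) : EPS (Ω × N) Φ N where
  part j p := M.part j p.1 ×ˢ Set.univ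
  mu j p q := if q.2 = j then M.mu j p.1 q.1 else 0
  interp _ p ψ := M.interp p.2 p.1 ψ
  mem_part i p := ⟨M.mem_part i p.1, trivial⟩
  part_cell i p q hq := by
    have := M.part_cell i p.1 q.1 hq.1
    simp [this]
  mu_prob i p := by
    rw [ENNReal.tsum_prod']
    have h : ∀ a : Ω, (∑' b : N, if b = i then M.mu i p.1 a else 0) = M.mu i p.1 a :=
      fun a => tsum_ite_eq i _
    simp only [h]
    exact M.mu_prob i p.1
  mu_supp i p q hq := by
    by_cases h : q.2 = i
    · simp only [h, if_true]
      exact M.mu_supp i p.1 q.1 (fun hmem => hq ⟨hmem, trivial⟩)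
    · simp [h]
  mu_const i p q hq := by
    funext r
    simp [M.mu_const i p.1 q.1 hq.1]

lemma lift_mval (M : EPS Ω Φ N) (j : N) (ω : Ω) (i : N) (S : Set (Ω × N)) :
    (lift M).mval j (ω, i) (S ∩ (lift M).part j (ω, i))
      = M.mval j ω ({ω' | (ω', j) ∈ S} ∩ M.part j ω) := by
  unfold mval
  rw [tsum_subtype, tsum_subtype, ENNReal.tsum_prod']
  congr 1
  funext a
  rw [tsum_eq_single j]
  · by_cases h : (a, j) ∈ S ∧ a ∈ M.part j ω
    · have h1 : (a, j) ∈ S ∩ (lift M).part j (ω, i) := ⟨h.1, h.2, trivial⟩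
      have h2 : a ∈ {ω' | (ω', j) ∈ S} ∩ M.part j ω := ⟨h.1, h.2⟩
      rw [Set.indicator_of_mem h1, Set.indicator_of_mem h2]
      simp [lift]
    · rw [Set.indicator_of_notMem, Set.indicator_of_notMem]
      · intro hmem
        exact h ⟨hmem.1, hmem.2⟩
      · intro hmem
        exact h ⟨hmem.1, hmem.2.1⟩
  · intro b hb
    rw [Set.indicator_apply]
    split
    · simp [lift, hb]
    · rfl

lemma lift_Bset (M : EPS Ω Φ N) (j : N) (T : Set Ω) (S : Set (Ω × N))
    (h : ∀ ω', (ω', j) ∈ S ↔ ω' ∈ T) :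
    (lift M).Bset j S = (M.Bset j T) ×ˢ (Set.univ : Set N) := by
  ext ⟨ω, i⟩
  simp only [Bset, Set.mem_setOf_eq, Set.mem_prod, Set.mem_univ, and_true]
  rw [lift_mval]
  have hT : {ω' | (ω', j) ∈ S} = T := Set.ext h
  rw [hT]

lemma lift_Eset (M : EPS Ω Φ N) (G : Finset N) (T : Set Ω) :
    (lift M).Eset G (T ×ˢ (Set.univ : Set N)) = (M.Eset G T) ×ˢ (Set.univ : Set N) := by
  have h : ∀ j : N, (lift M).Bset j (T ×ˢ (Set.univ : Set N))
      = (M.Bset j T) ×ˢ (Set.univ : Set N) := by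
    intro j
    exact lift_Bset M j T _ (fun ω' => by simp)
  ext ⟨ω, i⟩
  simp [Eset, h]

lemma lift_EIter (M : EPS Ω Φ N) (G : Finset N) (T : Set Ω) :
    ∀ k : ℕ, (lift M).EIter G k (T ×ˢ (Set.univ : Set N))
      = (M.EIter G k T) ×ˢ (Set.univ : Set N) := by
  intro k
  induction k with
  | zero => rfl
  | succ k ih => rw [EIter, EIter, ih, lift_Eset]

lemma lift_satIn (M : EPS Ω Φ N) (φ : Formula Φ N) :
    ∀ (ω : Ω) (i k : N), ((ω, i) ∈ (lift M).satIn φ k ↔ ω ∈ M.satIn φ i) := by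
  induction φ with
  | tru => intro ω i k; simp [satIn]
  | prim p => intro ω i k; simp [satIn, lift]
  | neg φ ih => intro ω i k; simp only [satIn, Set.mem_compl_iff]; rw [ih]
  | and φ ψ ih1 ih2 =>
      intro ω i k
      simp only [satIn, Set.mem_inter_iff]
      rw [ih1, ih2]
  | prob j kk a φs b ih =>
      intro ω i k
      simp only [satIn, Set.mem_setOf_eq]
      have h : ∀ m, (lift M).mval j (ω, i)
            ((lift M).satIn (φs m) j ∩ (lift M).part j (ω, i))
          = M.mval j ω (M.satIn (φs m) j ∩ M.part j ω) := by
        intro m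
        rw [lift_mval]
        congr 2
        exact Set.ext fun ω' => ih m ω' j j
      simp only [h]
  | cb G φ ih =>
      intro ω i k
      have hinner : (⋂ j ∈ G, (lift M).Bset j ((lift M).satIn φ j))
          = (⋂ j ∈ G, M.Bset j (M.satIn φ j)) ×ˢ (Set.univ : Set N) := by
        have hB : ∀ j : N, (lift M).Bset j ((lift M).satIn φ j)
            = (M.Bset j (M.satIn φ j)) ×ˢ (Set.univ : Set N) :=
          fun j => lift_Bset M j _ _ (fun ω' => ih ω' j j)
        ext ⟨ω', i'⟩
        simp [hB]
      simp only [satIn, Set.mem_iInter, hinner, lift_EIter]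
      constructor
      · intro h k'
        exact (h k').1
      · intro h k'
        exact ⟨h k', trivial⟩

end EPS

/-- A formula `φ` is valid under innermost-scope semantics in all epistemic probability
structures iff `φ` is valid in all common-interpretation epistemic probability
structures (where the standard semantics coincides with innermost scope). -/
theorem in_valid_iff_common_valid
    {Φ N : Type} (φ : Formula Φ N) :
    (∀ (Ω : Type) (M : EPS Ω Φ N) (ω : Ω) (i : N), ω ∈ M.satIn φ i) ↔
    (∀ (Ω : Type) (M : EPS Ω Φ N), (∀ j j', M.interp j = M.interp j') →
      ∀ (ω : Ω) (i : N), ω ∈ M.satIn φ i) := by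
  constructor
  · intro h Ω M _ ω i
    exact h Ω M ω i
  · intro h Ω M ω i
    have hv := h (Ω × N) (EPS.lift M) (fun j j' => rfl) (ω, i) i
    exact (EPS.lift_satIn M φ ω i i).mp hv
end

section
/- A formula φ is valid under outermost-scope semantics in all epistemic probability structures if and only if it is valid under innermost-scope semantics in all epistemic probability structures (both being equivalent to validity in all common-interpretation structures). -/
open scoped ENNReal

namespace EPS

open scoped Classical

variable {Ω Φ N : Type}

/-- Product construction: states `Ω × N`, agent `j`'s cell at `(ω, k)` is
`Π_j(ω) × N` with measure concentrated on second coordinate `j`, and the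
interpretation at state `(ω, k)` is `k`'s interpretation (common interpretation). -/
noncomputable def prodEPS (M : EPS Ω Φ N) : EPS (Ω × N) Φ N where
  part j p := {q | q.1 ∈ M.part j p.1}
  mu j p q := if q.2 = j then M.mu j p.1 q.1 else 0
  interp _ p := M.interp p.2 p.1
  mem_part j p := M.mem_part j p.1
  part_cell j p q h := by
    ext r; simp only [Set.mem_setOf_eq, M.part_cell j p.1 q.1 h]
  mu_prob j p := by
    rw [ENNReal.tsum_prod']
    have h : ∀ x : Ω, (∑' l : N, if l = j then M.mu j p.1 x else 0) = M.mu j p.1 x :=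
      fun x => tsum_ite_eq j _
    simp_rw [h]
    exact M.mu_prob j p.1
  mu_supp j p q h := by
    simp only [Set.mem_setOf_eq] at h
    show (if q.2 = j then M.mu j p.1 q.1 else 0) = 0
    split
    · exact M.mu_supp j p.1 q.1 h
    · rfl
  mu_const j p q h := by
    funext r
    simp only [M.mu_const j p.1 q.1 h]

lemma prod_mval (M : EPS Ω Φ N) (j : N) (p : Ω × N) (S : Set (Ω × N)) :
    (prodEPS M).mval j p S = M.mval j p.1 {x | (x, j) ∈ S} := by
  unfold mval
  rw [tsum_subtype, tsum_subtype, ENNReal.tsum_prod']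
  have h : ∀ x l, S.indicator ((prodEPS M).mu j p) (x, l)
      = if l = j then ({x | (x, j) ∈ S}).indicator (M.mu j p.1) x else 0 := by
    intro x l
    by_cases hl : l = j
    · subst hl
      by_cases hs : (x, l) ∈ S <;>
        simp [Set.indicator, hs, prodEPS, Set.mem_setOf_eq]
    · by_cases hs : (x, l) ∈ S <;>
        simp [Set.indicator, hs, hl, prodEPS]
  simp_rw [h]
  congr 1
  funext x
  exact tsum_ite_eq j _

lemma prod_Bset (M : EPS Ω Φ N) (j : N) (S : Set (Ω × N)) :
    (prodEPS M).Bset j S = {p | p.1 ∈ M.Bset j {x | (x, j) ∈ S}} := by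
  ext p
  simp only [Bset, Set.mem_setOf_eq, prod_mval]
  exact Iff.rfl

lemma prod_Bset_pre (M : EPS Ω Φ N) (j : N) (T : Set Ω) :
    (prodEPS M).Bset j (Prod.fst ⁻¹' T) = Prod.fst ⁻¹' (M.Bset j T) := by
  rw [prod_Bset]; rfl

lemma prod_Eset_pre (M : EPS Ω Φ N) (G : Finset N) (T : Set Ω) :
    (prodEPS M).Eset G (Prod.fst ⁻¹' T) = Prod.fst ⁻¹' (M.Eset G T) := by
  ext p
  simp [Eset, prod_Bset_pre]

lemma prod_EIter_pre (M : EPS Ω Φ N) (G : Finset N) (k : ℕ) (T : Set Ω) :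
    (prodEPS M).EIter G k (Prod.fst ⁻¹' T) = Prod.fst ⁻¹' (M.EIter G k T) := by
  induction k with
  | zero => rfl
  | succ k ih => simp only [EIter, ih, prod_Eset_pre]

lemma prod_satOu (M : EPS Ω Φ N) (φ : Formula Φ N) (a : N) :
    (prodEPS M).satOu φ a = {p : Ω × N | p.1 ∈ M.satIn φ p.2} := by
  induction φ generalizing a with
  | tru => ext p; simp [satOu, satIn]
  | prim q => ext p; simp [satOu, satIn, prodEPS]
  | neg φ ih => ext p; simp [satOu, satIn, ih]
  | and φ ψ ih1 ih2 => ext p; simp [satOu, satIn, ih1, ih2]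
  | prob j k c φs b ih =>
    ext p
    simp only [satOu, satIn, Set.mem_setOf_eq, prod_mval]
    have h : ∀ m, {x | (x, j) ∈ (prodEPS M).satOu (φs m) a ∩ (prodEPS M).part j p}
        = M.satIn (φs m) j ∩ M.part j p.1 := by
      intro m
      rw [ih m a]
      rfl
    simp_rw [h]
  | cb G φ ih =>
    have hE : (prodEPS M).Eset G ((prodEPS M).satOu φ a)
        = Prod.fst ⁻¹' (⋂ j ∈ G, M.Bset j (M.satIn φ j)) := by
      rw [ih]
      ext p
      simp only [Eset, Set.mem_iInter, Set.mem_preimage, prod_Bset, Set.mem_setOf_eq,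
        Set.setOf_mem_eq]
    show (⋂ k, (prodEPS M).EIter G k ((prodEPS M).Eset G ((prodEPS M).satOu φ a))) = _
    rw [hE]
    ext p
    simp only [Set.mem_iInter, prod_EIter_pre, Set.mem_preimage, Set.mem_setOf_eq, satIn]

/-- Common-interpretation structure: replace every agent's interpretation by `i`'s. -/
def constEPS (M : EPS Ω Φ N) (i : N) : EPS Ω Φ N :=
  { M with interp := fun _ => M.interp i }

lemma const_Bset (M : EPS Ω Φ N) (i j : N) (S : Set Ω) :
    (constEPS M i).Bset j S = M.Bset j S := rfl

lemma const_Eset (M : EPS Ω Φ N) (i : N) (G : Finset N) (S : Set Ω) :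
    (constEPS M i).Eset G S = M.Eset G S := rfl

lemma const_EIter (M : EPS Ω Φ N) (i : N) (G : Finset N) (k : ℕ) (S : Set Ω) :
    (constEPS M i).EIter G k S = M.EIter G k S := by
  induction k with
  | zero => rfl
  | succ k ih => simp only [EIter, ih, const_Eset]

lemma const_satIn (M : EPS Ω Φ N) (i : N) (φ : Formula Φ N) (a : N) :
    (constEPS M i).satIn φ a = M.satOu φ i := by
  induction φ generalizing a with
  | tru => rfl
  | prim q => rfl
  | neg φ ih => ext ω; simp [satIn, satOu, ih]
  | and φ ψ ih1 ih2 => ext ω; simp [satIn, satOu, ih1, ih2]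
  | prob j k c φs b ih =>
    ext ω
    simp only [satIn, satOu, Set.mem_setOf_eq]
    have h : ∀ m, (constEPS M i).satIn (φs m) j = M.satOu (φs m) i := fun m => ih m j
    simp_rw [h]
    exact Iff.rfl
  | cb G φ ih =>
    ext ω
    simp only [satIn, satOu, Set.mem_iInter, const_EIter]
    have h : (⋂ j ∈ G, (constEPS M i).Bset j ((constEPS M i).satIn φ j))
        = M.Eset G (M.satOu φ i) := by
      simp only [Eset, const_Bset]
      ext x
      simp only [Set.mem_iInter]
      constructor <;> intro hx j hj <;> [rw [← ih j]; rw [ih j]] <;> exact hx j hj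
    rw [h]

end EPS

/-- A formula `φ` is valid under outermost-scope semantics in all epistemic probability
structures iff it is valid under innermost-scope semantics in all epistemic probability
structures. -/
theorem ou_valid_iff_in_valid
    {Φ N : Type} (φ : Formula Φ N) :
    (∀ (Ω : Type) (M : EPS Ω Φ N) (ω : Ω) (i : N), ω ∈ M.satOu φ i) ↔
    (∀ (Ω : Type) (M : EPS Ω Φ N) (ω : Ω) (i : N), ω ∈ M.satIn φ i) := by
  constructor
  · intro h Ω M ω i
    have := h (Ω × N) (EPS.prodEPS M) (ω, i) i
    rw [EPS.prod_satOu] at this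
    exact this
  · intro h Ω M ω i
    have := h Ω (EPS.constEPS M i) ω i
    rw [EPS.const_satIn] at this
    exact this
end

section
/- Under innermost-scope semantics, mutual belief of degree 2 implies mutual belief of degree 1: if (M, ω, i) ⊨^in E_G² ψ then (M, ω, i) ⊨^in E_G ψ, where E_G ψ = ∧_{j∈G} B_j ψ and E_G² ψ = E_G E_G ψ. -/
open scoped ENNReal

lemma mval_le_one {Ω Φ N : Type} (M : EPS Ω Φ N) (j : N) (ω : Ω) (S : Set Ω) :
    M.mval j ω S ≤ 1 := by
  rw [EPS.mval, tsum_subtype, ← M.mu_prob j ω]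
  exact ENNReal.tsum_le_tsum fun x => Set.indicator_le_self _ _ x

lemma satIn_Bf {Ω Φ N : Type} (M : EPS Ω Φ N) (j : N) (φ : Formula Φ N) (i : N) :
    M.satIn (Bf j φ) i = M.Bset j (M.satIn φ j) := by
  ext ω
  simp only [Bf, EPS.satIn, EPS.Bset, Set.mem_setOf_eq, Fin.sum_univ_one,
    Rat.cast_one, one_mul]
  set x := M.mval j ω (M.satIn φ j ∩ M.part j ω) with hx
  have hle : x ≤ 1 := mval_le_one M j ω _
  constructor
  · intro h1
    have hne : x ≠ ⊤ := by
      intro hT; rw [hT] at hle; exact (by simp : ¬ (⊤ : ℝ≥0∞) ≤ 1) hle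
    have h2 : x.toReal ≤ 1 := by
      have := ENNReal.toReal_mono (by simp) hle
      simpa using this
    have : x.toReal = 1 := le_antisymm h2 h1
    rwa [ENNReal.toReal_eq_one_iff] at this
  · intro h1; rw [h1]; simp

lemma mem_satIn_bigAnd {Ω Φ N : Type} (M : EPS Ω Φ N) (l : List (Formula Φ N))
    (i : N) (ω : Ω) :
    ω ∈ M.satIn (bigAnd l) i ↔ ∀ φ ∈ l, ω ∈ M.satIn φ i := by
  induction l with
  | nil => simp [bigAnd, EPS.satIn]
  | cons hd tl ih =>
    simp only [bigAnd, List.foldr_cons, EPS.satIn, Set.mem_inter_iff, List.mem_cons]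
    rw [show List.foldr Formula.and Formula.tru tl = bigAnd tl from rfl, ih]
    constructor
    · rintro ⟨h1, h2⟩ φ (rfl | hφ)
      · exact h1
      · exact h2 _ hφ
    · intro h; exact ⟨h _ (Or.inl rfl), fun φ hφ => h _ (Or.inr hφ)⟩

lemma mem_satIn_Ef {Ω Φ N : Type} (M : EPS Ω Φ N) (G : Finset N)
    (ψ : Formula Φ N) (i : N) (ω : Ω) :
    ω ∈ M.satIn (Ef G ψ) i ↔ ∀ j ∈ G, ω ∈ M.Bset j (M.satIn ψ j) := by
  rw [Ef, mem_satIn_bigAnd]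
  constructor
  · intro h j hj
    have := h (Bf j ψ) (List.mem_map.mpr ⟨j, Finset.mem_toList.mpr hj, rfl⟩)
    rwa [satIn_Bf] at this
  · intro h φ hφ
    obtain ⟨j, hj, rfl⟩ := List.mem_map.mp hφ
    rw [satIn_Bf]
    exact h j (Finset.mem_toList.mp hj)

/-- Under innermost-scope semantics, mutual belief of degree 2 implies mutual belief of
degree 1: if `(M,ω,i) ⊨^in E_G² ψ` then `(M,ω,i) ⊨^in E_G ψ`, where
`E_G ψ = ⋀_{j∈G} B_j ψ` and `E_G² ψ = E_G (E_G ψ)`, for a nonempty group `G`. -/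
theorem mutual_belief_two_implies_one_in
    {Ω Φ N : Type} (M : EPS Ω Φ N) (G : Finset N) (hG : G.Nonempty)
    (ψ : Formula Φ N) (i : N) (ω : Ω)
    (h : ω ∈ M.satIn (Ef G (Ef G ψ)) i) :
    ω ∈ M.satIn (Ef G ψ) i := by
  rw [mem_satIn_Ef] at h ⊢
  intro j hj
  have hB := h j hj
  rw [EPS.Bset, Set.mem_setOf_eq] at hB
  -- find a point of full-measure set with positive mass
  have hex : ∃ ω', ω' ∈ M.satIn (Ef G ψ) j ∩ M.part j ω ∧ M.mu j ω ω' ≠ 0 := by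
    by_contra hc
    push_neg at hc
    have : M.mval j ω (M.satIn (Ef G ψ) j ∩ M.part j ω) = 0 := by
      rw [EPS.mval, ENNReal.tsum_eq_zero]
      rintro ⟨x, hx⟩
      exact hc x hx
    rw [this] at hB
    exact one_ne_zero hB.symm
  obtain ⟨ω', ⟨hE, hpart⟩, _⟩ := hex
  rw [mem_satIn_Ef] at hE
  have hB' := hE j hj
  rw [EPS.Bset, Set.mem_setOf_eq] at hB'
  rw [EPS.Bset, Set.mem_setOf_eq]
  have hpc : M.part j ω' = M.part j ω := M.part_cell j ω ω' hpart
  have hmc : M.mu j ω' = M.mu j ω := M.mu_const j ω ω' hpart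
  rw [EPS.mval] at hB' ⊢
  rw [hpc, hmc] at hB'
  exact hB'
end

section
/- Translation correctness for outermost scope (Theorem 2(b)): for every formula φ of the ambiguous language, every epistemic probability structure M over Φ, every state ω, and every agent i, we have (M, ω, i) ⊨^ou φ if and only if (M_c, ω) ⊨ φ_i^ou, where M_c is the corresponding common-interpretation structure over Φ × N with π(ω)(p,i) = π_i(ω)(p), and the translation is defined by: p_i^ou = (p,i); (ψ ∧ ψ')_i^ou = ψ_i^ou ∧ ψ'_i^ou; (¬ψ)_i^ou = ¬(ψ_i^ou); (a₁pr_j(φ₁)+...+a_k pr_j(φ_k) ≥ b)_i^ou = a₁pr_j((φ₁)_i^ou)+...+a_k pr_j((φ_k)_i^ou) ≥ b; (C_G ψ)_i^ou = C_G(ψ_i^ou). -/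
open scoped ENNReal

/-- The outermost-scope translation `φ ↦ φ_i^ou` into the language over `Φ × N`. -/
def trOu {Φ N : Type} (i : N) : Formula Φ N → Formula (Φ × N) N
  | .tru => .tru
  | .prim p => .prim (p, i)
  | .neg φ => .neg (trOu i φ)
  | .and φ ψ => .and (trOu i φ) (trOu i ψ)
  | .prob j k a φs b => .prob j k a (fun m => trOu i (φs m)) b
  | .cb G φ => .cb G (trOu i φ)


/-- Translation correctness for outermost scope (Theorem 2(b)): for every formula `φ`
of the ambiguous language, structure `M` over `Φ`, state `ω`, and agent `i`,
`(M,ω,i) ⊨^ou φ` iff `(M_c,ω) ⊨ φ_i^ou`, where `M_c` is the corresponding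
common-interpretation structure over `Φ × N` (same states, partitions, and probability
assignments, with `π(ω)(p,j) = π_j(ω)(p)` for every agent).  Since `M_c` has a common
interpretation, its standard semantics is rendered as `satOu` at an arbitrary agent
`i₀`. -/
theorem translation_correct_ou
    {Ω Φ N : Type} (M : EPS Ω Φ N) (Mc : EPS Ω (Φ × N) N)
    (hpart : Mc.part = M.part) (hmu : Mc.mu = M.mu)
    (hinterp : Mc.interp = fun _ ω q => M.interp q.2 ω q.1) :
    ∀ (φ : Formula Φ N) (ω : Ω) (i i₀ : N),
      ω ∈ M.satOu φ i ↔ ω ∈ Mc.satOu (trOu i φ) i₀ := by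
  have hmval : ∀ j ω S, Mc.mval j ω S = M.mval j ω S := by
    intro j ω S; simp [EPS.mval, hmu]
  have hB : ∀ j S, Mc.Bset j S = M.Bset j S := by
    intro j S; ext ω; simp [EPS.Bset, hmval, hpart]
  have hE : ∀ G S, Mc.Eset G S = M.Eset G S := by
    intro G S; simp [EPS.Eset, hB]
  have hEI : ∀ G k S, Mc.EIter G k S = M.EIter G k S := by
    intro G k
    induction k with
    | zero => intro S; rfl
    | succ k ih => intro S; simp [EPS.EIter, hE, ih]
  have main : ∀ (φ : Formula Φ N) (i i₀ : N), Mc.satOu (trOu i φ) i₀ = M.satOu φ i := by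
    intro φ
    induction φ with
    | tru => intro i i₀; rfl
    | prim p => intro i i₀; simp [EPS.satOu, trOu, hinterp]
    | neg φ ih => intro i i₀; simp [EPS.satOu, trOu, ih]
    | and φ ψ ih1 ih2 => intro i i₀; simp [EPS.satOu, trOu, ih1, ih2]
    | prob j k a φs b ih => intro i i₀; simp [EPS.satOu, trOu, hmval, hpart, ih]
    | cb G φ ih => intro i i₀; simp [EPS.satOu, trOu, hEI, hE, ih]
  intro φ ω i i₀
  rw [main]
end

section
/- The naive common-belief translation fails for innermost scope: there exists an epistemic probability structure M with two agents and one primitive proposition p, a state ω, and agent 1 such that (M, ω, 1) ⊨^in C_{{1,2}} p but (M_c, ω) ⊭ C_{{1,2}} (p,1); that is, C_{{1,2}}(p_1^in) with p_1^in = (p,1) is not equivalent to (C_{{1,2}} p)_1^in. -/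
open scoped ENNReal

section Example

open EPS

/-- The example structure: two states, agent 0 is a Dirac measure on state 0 and
interprets `p` as "state = 0"; agent 1 is uniform and interprets `p` as true. -/
noncomputable def Mex : EPS (Fin 2) Unit (Fin 2) where
  part _ _ := Set.univ
  mu i _ x := if i = 0 then (if x = 0 then 1 else 0) else 2⁻¹
  interp i ω _ := i = 0 → ω = 0
  mem_part _ _ := trivial
  part_cell _ _ _ _ := rfl
  mu_prob i ω := by
    fin_cases i
    · show (∑' x : Fin 2, (if x = 0 then (1 : ℝ≥0∞) else 0)) = 1
      rw [tsum_fintype, Fin.sum_univ_two]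
      simp
    · show (∑' _ : Fin 2, (2⁻¹ : ℝ≥0∞)) = 1
      rw [tsum_fintype, Fin.sum_univ_two, ENNReal.inv_two_add_inv_two]
  mu_supp _ _ ω' h := absurd trivial h
  mu_const _ _ _ _ := rfl

noncomputable def Mcex : EPS (Fin 2) (Unit × Fin 2) (Fin 2) where
  part := Mex.part
  mu := Mex.mu
  interp := fun _ ω q => Mex.interp q.2 ω q.1
  mem_part := Mex.mem_part
  part_cell := Mex.part_cell
  mu_prob := Mex.mu_prob
  mu_supp := Mex.mu_supp
  mu_const := Mex.mu_const

lemma Mex_mval_univ (j : Fin 2) (ω : Fin 2) : Mex.mval j ω Set.univ = 1 := by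
  rw [EPS.mval, tsum_univ]
  exact Mex.mu_prob j ω

lemma Mex_Bset_univ (j : Fin 2) : Mex.Bset j Set.univ = Set.univ := by
  ext ω
  simp only [EPS.Bset, Set.mem_setOf_eq, Set.mem_univ, iff_true]
  have h : (Set.univ : Set (Fin 2)) ∩ Mex.part j ω = Set.univ := by
    simp [Mex]
  rw [h, Mex_mval_univ]

lemma Mex_EIter_univ (G : Finset (Fin 2)) (k : ℕ) :
    Mex.EIter G k Set.univ = Set.univ := by
  induction k with
  | zero => rfl
  | succ k ih =>
    show Mex.Eset G (Mex.EIter G k Set.univ) = Set.univ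
    rw [ih, EPS.Eset]
    simp [Mex_Bset_univ]

lemma Mex_Bset_prim (j : Fin 2) :
    Mex.Bset j (Mex.satIn (.prim ()) j) = Set.univ := by
  ext ω
  simp only [EPS.Bset, Set.mem_setOf_eq, Set.mem_univ, iff_true]
  fin_cases j
  · show Mex.mval 0 ω (Mex.satIn (.prim ()) 0 ∩ Mex.part 0 ω) = 1
    have h1 : Mex.satIn (.prim ()) (0 : Fin 2) ∩ Mex.part 0 ω = {(0 : Fin 2)} := by
      ext x
      simp [EPS.satIn, Mex]
    rw [h1, EPS.mval, tsum_singleton]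
    simp [Mex]
  · show Mex.mval 1 ω (Mex.satIn (.prim ()) 1 ∩ Mex.part 1 ω) = 1
    have h1 : Mex.satIn (.prim ()) (1 : Fin 2) ∩ Mex.part 1 ω = Set.univ := by
      ext x
      simp [EPS.satIn, Mex]
    rw [h1, Mex_mval_univ]

end Example

/-- The naive common-belief translation fails for innermost scope: there is a structure
`M` with two agents and one primitive proposition `p`, a state `ω`, and agent `1`
(index `0`) such that `(M,ω,1) ⊨^in C_{{1,2}} p` but, in the corresponding
common-interpretation structure `M_c` over `Φ × N`, `(M_c,ω) ⊭ C_{{1,2}} (p,1)`;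
i.e. `C_{{1,2}}(p_1^in)` is not equivalent to `(C_{{1,2}} p)_1^in`. -/



theorem naive_common_belief_translation_fails :
    ∃ (Ω : Type) (M : EPS Ω Unit (Fin 2)) (Mc : EPS Ω (Unit × Fin 2) (Fin 2)) (ω : Ω),
      Mc.part = M.part ∧ Mc.mu = M.mu ∧
      Mc.interp = (fun _ ω q => M.interp q.2 ω q.1) ∧
      ω ∈ M.satIn (.cb {0, 1} (.prim ())) 0 ∧
      ∀ i₀, ω ∉ Mc.satOu (.cb {0, 1} (.prim ((), 0))) i₀ := by
  
  refine ⟨Fin 2, Mex, Mcex, 0, rfl, rfl, rfl, ?_, ?_⟩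
  · -- innermost common belief holds
    show (0 : Fin 2) ∈ ⋂ k : ℕ, Mex.EIter {0, 1} k (⋂ j ∈ ({0, 1} : Finset (Fin 2)), Mex.Bset j (Mex.satIn (.prim ()) j))
    have hinner : (⋂ j ∈ ({0, 1} : Finset (Fin 2)), Mex.Bset j (Mex.satIn (.prim ()) j)) = Set.univ := by
      simp [Mex_Bset_prim]
    rw [hinner]
    simp [Mex_EIter_univ]
  · intro i₀ hmem
    have h0 : (0 : Fin 2) ∈ Mcex.EIter {0, 1} 0
        (Mcex.Eset {0, 1} (Mcex.satOu (.prim ((), 0)) i₀)) := by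
      exact Set.mem_iInter.mp hmem 0
    have h1 : (0 : Fin 2) ∈ Mcex.Bset 1 (Mcex.satOu (.prim ((), 0)) i₀) := by
      have := Set.mem_iInter.mp h0 (1 : Fin 2)
      exact Set.mem_iInter.mp this (by simp)
    have hT : Mcex.satOu (.prim ((), 0)) i₀ ∩ Mcex.part 1 0 = {(0 : Fin 2)} := by
      ext x
      simp [EPS.satOu, Mcex, Mex, eq_comm]
    rw [EPS.Bset, Set.mem_setOf_eq, hT, EPS.mval, tsum_singleton] at h1
    simp only [Mcex, Mex] at h1
    norm_num at h1
end

section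
/- Under outermost scope with ambiguity about information partitions, if in every world ω' that agent i considers possible all agents' interpretations agree with i's (π_i(ω') = π_j(ω') for all j and all ω' in the support of i's beliefs, hereditarily), then outermost-scope and innermost-scope semantics agree for agent i at ω: (M, ω, i) ⊨^ou φ iff (M, ω, i) ⊨^in φ for all formulas φ. -/
open scoped ENNReal

namespace EPS

variable {Ω Φ N : Type}

lemma mval_congr (M : EPS Ω Φ N) (j : N) (x : Ω) {S T : Set Ω}
    (h : ∀ y, M.mu j x y ≠ 0 → (y ∈ S ↔ y ∈ T)) :
    M.mval j x S = M.mval j x T := by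
  unfold mval
  rw [tsum_subtype, tsum_subtype]
  congr 1; funext y
  by_cases hy : M.mu j x y = 0
  · by_cases hS : y ∈ S <;> by_cases hT : y ∈ T <;>
      simp [Set.indicator_apply, hS, hT, hy]
  · by_cases hS : y ∈ S
    · simp [Set.indicator_apply, hS, (h y hy).mp hS]
    · have hT : y ∉ T := fun hT => hS ((h y hy).mpr hT)
      simp [Set.indicator_apply, hS, hT]

lemma Bset_agree (M : EPS Ω Φ N) {R S T : Set Ω}
    (hR : ∀ x ∈ R, ∀ j y, M.mu j x y ≠ 0 → y ∈ R)
    (h : ∀ x ∈ R, (x ∈ S ↔ x ∈ T)) (j : N) :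
    ∀ x ∈ R, (x ∈ M.Bset j S ↔ x ∈ M.Bset j T) := by
  intro x hx
  have key : M.mval j x (S ∩ M.part j x) = M.mval j x (T ∩ M.part j x) := by
    apply mval_congr
    intro y hy
    have hyR : y ∈ R := hR x hx j y hy
    simp [h y hyR]
  simp [Bset, key]

lemma Eset_agree (M : EPS Ω Φ N) {R S T : Set Ω}
    (hR : ∀ x ∈ R, ∀ j y, M.mu j x y ≠ 0 → y ∈ R)
    (h : ∀ x ∈ R, (x ∈ S ↔ x ∈ T)) (G : Finset N) :
    ∀ x ∈ R, (x ∈ M.Eset G S ↔ x ∈ M.Eset G T) := by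
  intro x hx
  simp only [Eset, Set.mem_iInter]
  exact forall_congr' fun j => forall_congr' fun _ => M.Bset_agree hR h j x hx

lemma EIter_agree (M : EPS Ω Φ N) {R : Set Ω}
    (hR : ∀ x ∈ R, ∀ j y, M.mu j x y ≠ 0 → y ∈ R) (G : Finset N) :
    ∀ (k : ℕ) {S T : Set Ω}, (∀ x ∈ R, (x ∈ S ↔ x ∈ T)) →
      ∀ x ∈ R, (x ∈ M.EIter G k S ↔ x ∈ M.EIter G k T) := by
  intro k
  induction k with
  | zero => intro S T h x hx; exact h x hx
  | succ n ih =>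
      intro S T h x hx
      exact M.Eset_agree hR (fun y hy => ih h y hy) G x hx

end EPS

/-- If in every world reachable from `ω` by a chain of positive-probability transitions
(including `ω` itself) all agents' interpretations agree, then outermost-scope and
innermost-scope semantics agree for agent `i` at `ω`:
`(M,ω,i) ⊨^ou φ` iff `(M,ω,i) ⊨^in φ` for all formulas `φ`. -/
theorem hereditary_agreement_ou_iff_in
    {Ω Φ N : Type} (M : EPS Ω Φ N) (ω : Ω) (i : N)
    (hher : ∀ ω', Relation.ReflTransGen (fun a b => ∃ j, 0 < M.mu j a b) ω ω' →
      ∀ j j' (p : Φ), M.interp j ω' p ↔ M.interp j' ω' p) :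
    ∀ φ : Formula Φ N, (ω ∈ M.satOu φ i ↔ ω ∈ M.satIn φ i) := by
  set R : Set Ω := {x | Relation.ReflTransGen (fun a b => ∃ j, 0 < M.mu j a b) ω x} with hRdef
  have hR : ∀ x ∈ R, ∀ j y, M.mu j x y ≠ 0 → y ∈ R := by
    intro x hx j y hy
    exact Relation.ReflTransGen.tail hx ⟨j, pos_iff_ne_zero.mpr hy⟩
  have hωR : ω ∈ R := Relation.ReflTransGen.refl
  have main : ∀ φ : Formula Φ N, ∀ x ∈ R, ∀ j : N,
      (x ∈ M.satOu φ i ↔ x ∈ M.satIn φ j) := by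
    intro φ
    induction φ with
    | tru => intro x hx j; simp [EPS.satOu, EPS.satIn]
    | prim p =>
        intro x hx j
        simp only [EPS.satOu, EPS.satIn, Set.mem_setOf_eq]
        exact hher x hx i j p
    | neg φ ih =>
        intro x hx j
        simp only [EPS.satOu, EPS.satIn, Set.mem_compl_iff]
        exact not_congr (ih x hx j)
    | and φ ψ ihφ ihψ =>
        intro x hx j
        simp only [EPS.satOu, EPS.satIn, Set.mem_inter_iff]
        exact and_congr (ihφ x hx j) (ihψ x hx j)
    | prob j' k a φs b ih =>
        intro x hx j
        simp only [EPS.satOu, EPS.satIn, Set.mem_setOf_eq]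
        have hm : ∀ m, M.mval j' x (M.satOu (φs m) i ∩ M.part j' x)
            = M.mval j' x (M.satIn (φs m) j' ∩ M.part j' x) := by
          intro m
          apply M.mval_congr
          intro y hy
          have hyR : y ∈ R := hR x hx j' y hy
          simp [ih m y hyR j']
        constructor <;> intro h <;> [rw [show (∑ m, (a m : ℝ) *
            (M.mval j' x (M.satIn (φs m) j' ∩ M.part j' x)).toReal)
            = ∑ m, (a m : ℝ) * (M.mval j' x (M.satOu (φs m) i ∩ M.part j' x)).toReal
            from Finset.sum_congr rfl fun m _ => by rw [hm m]];
          rw [show (∑ m, (a m : ℝ) *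
            (M.mval j' x (M.satOu (φs m) i ∩ M.part j' x)).toReal)
            = ∑ m, (a m : ℝ) * (M.mval j' x (M.satIn (φs m) j' ∩ M.part j' x)).toReal
            from Finset.sum_congr rfl fun m _ => by rw [hm m]]] <;> exact h
    | cb G φ ih =>
        intro x hx j
        simp only [EPS.satOu, EPS.satIn, Set.mem_iInter]
        have hbase : ∀ y ∈ R,
            (y ∈ M.Eset G (M.satOu φ i) ↔ y ∈ ⋂ j' ∈ G, M.Bset j' (M.satIn φ j')) := by
          intro y hy
          simp only [EPS.Eset, Set.mem_iInter]
          refine forall_congr' fun j' => forall_congr' fun _ => ?_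
          exact M.Bset_agree hR (fun z hz => ih z hz j') j' y hy
        exact forall_congr' fun k => M.EIter_agree hR G k hbase x hx
  exact fun φ => main φ ω hωR i
end
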